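/- arXiv:2405.09249 — 2 statements merged into one kernel-verified Lean document; each statement's English description precedes it below -/
import Mathlib

section
/- Every subcubic graph G with mad(G) < 9/4 has a square G² that is DP-5-colorable. -/
open scoped Classical

universe u v

/-- `(H, L)` is a DP-cover of `G`: fibers are cliques, cross edges exist only between
fibers of adjacent vertices and form matchings, and all edges stay within the lists. -/
def IsDPCover {V : Type u} (G : SimpleGraph V) (L : V → Finset ℕ)
    (H : SimpleGraph (V × ℕ)) : Prop :=
  (∀ v : V, ∀ c ∈ L v, ∀ c' ∈ L v, c ≠ c' → H.Adj (v, c) (v, c')) ∧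
  (∀ u v : V, ∀ c c' : ℕ, H.Adj (u, c) (v, c') →
      c ∈ L u ∧ c' ∈ L v ∧ (u = v ∨ G.Adj u v)) ∧
  (∀ u v : V, u ≠ v → ∀ c c₁ c₂ : ℕ,
      H.Adj (u, c) (v, c₁) → H.Adj (u, c) (v, c₂) → c₁ = c₂)

/-- `G` is DP-`k`-colorable: every cover with lists of size at least `k` admits an
independent transversal (one vertex from each fiber, pairwise nonadjacent in `H`). -/
def DPColorable {V : Type u} (G : SimpleGraph V) (k : ℕ) : Prop :=
  ∀ (L : V → Finset ℕ) (H : SimpleGraph (V × ℕ)),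
    IsDPCover G L H → (∀ v, k ≤ (L v).card) →
    ∃ f : V → ℕ, (∀ v, f v ∈ L v) ∧
      ∀ u v : V, u ≠ v → ¬ H.Adj (u, f u) (v, f v)

noncomputable def dpChromaticNumber {V : Type u} (G : SimpleGraph V) : ℕ :=
  sInf {k | DPColorable G k}

/-- The square of a graph: join vertices at distance at most 2. -/
def graphSq {V : Type u} (G : SimpleGraph V) : SimpleGraph V where
  Adj u v := u ≠ v ∧ (G.Adj u v ∨ ∃ w, G.Adj u w ∧ G.Adj w v)
  symm := by
    constructor
    rintro u v ⟨h1, h2⟩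
    refine ⟨h1.symm, ?_⟩
    rcases h2 with h | ⟨w, hw1, hw2⟩
    · exact Or.inl h.symm
    · exact Or.inr ⟨w, hw2.symm, hw1.symm⟩
  loopless := ⟨fun v h => h.1 rfl⟩

/-- `G` is `k`-minimal: `G²` is not DP-`k`-colorable but the square of every proper
subgraph of `G` is DP-`k`-colorable. -/
def KMinimal {V : Type u} (G : SimpleGraph V) (k : ℕ) : Prop :=
  ¬ DPColorable (graphSq G) k ∧ ∀ H : SimpleGraph V, H < G → DPColorable (graphSq H) k

/-- `mad(G) < q`: every nonempty (induced) subgraph has average degree less than `q`.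
The filtered product counts each edge twice, i.e. it equals `2|E(H)|`. -/
def MadLT {V : Type u} [Fintype V] (G : SimpleGraph V) (q : ℚ) : Prop :=
  ∀ s : Finset V, s.Nonempty →
    ((((s ×ˢ s).filter fun p : V × V => G.Adj p.1 p.2).card : ℚ)) < q * s.card

/-- `H` is a minor of `G`. -/
def HasMinor {V : Type u} {W : Type v} (G : SimpleGraph V) (H : SimpleGraph W) : Prop :=
  ∃ f : W → Set V, (∀ w, (f w).Nonempty) ∧
    (∀ w, (G.induce (f w)).Connected) ∧
    (∀ w w', w ≠ w' → Disjoint (f w) (f w')) ∧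
    (∀ w w', H.Adj w w' → ∃ x ∈ f w, ∃ y ∈ f w', G.Adj x y)

/-- Planarity via Wagner's theorem: no `K₅` minor and no `K₃,₃` minor. -/
def PlanarGraph {V : Type u} (G : SimpleGraph V) : Prop :=
  ¬ HasMinor G (⊤ : SimpleGraph (Fin 5)) ∧
  ¬ HasMinor G (completeBipartiteGraph (Fin 3) (Fin 3))

/-!
Greedy colouring shows that `G²` is DP-5-colourable as soon as every nonempty vertex set `s`
contains a vertex with at most four `G²`-neighbours in `s`: the matching condition of a cover
lets each coloured neighbour forbid at most one colour.

For that degeneracy, suppose every vertex of `s` has at least five `G²`-neighbours in `s`, and let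
`T` be `s` together with the outside vertices having at least two neighbours in `s`. A discharging
argument, in which every vertex of `s` needs 18 and collects charge from its neighbours, gives
`18 |T| ≤ 8 · 2|E(G[T])|`, i.e. `T` has average degree at least `9/4`.
-/

open Finset

namespace SimpleGraph

variable {V : Type u} (G : SimpleGraph V)

noncomputable def degreeIn (s : Finset V) (x : V) : ℕ := #{u ∈ s | G.Adj x u}

lemma degreeIn_le_degree [Fintype V] (s : Finset V) (x : V) : G.degreeIn s x ≤ G.degree x := by
  rw [← card_neighborFinset_eq_degree]
  exact card_le_card fun u hu => (mem_neighborFinset ..).2 (mem_filter.1 hu).2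

lemma degreeIn_mono {s t : Finset V} (h : s ⊆ t) (x : V) : G.degreeIn s x ≤ G.degreeIn t x :=
  card_le_card (filter_subset_filter _ h)

lemma degreeIn_union {s t : Finset V} (h : Disjoint s t) (x : V) :
    G.degreeIn (s ∪ t) x = G.degreeIn s x + G.degreeIn t x := by
  simp only [degreeIn, filter_union]
  exact card_union_of_disjoint (disjoint_filter_filter h)

lemma degreeIn_erase_add_one {s : Finset V} {v x : V} (hv : v ∈ s) (h : G.Adj x v) :
    G.degreeIn (s.erase v) x + 1 = G.degreeIn s x := by
  simp only [degreeIn, filter_erase]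
  exact card_erase_add_one (mem_filter.2 ⟨hv, h⟩)

lemma sum_degreeIn_comm (s t : Finset V) :
    ∑ x ∈ s, G.degreeIn t x = ∑ x ∈ t, G.degreeIn s x := by
  simp only [degreeIn, card_filter]
  rw [sum_comm]
  simp only [G.adj_comm]

lemma card_adj_pairs_eq_sum_degreeIn (s : Finset V) :
    #{p ∈ s ×ˢ s | G.Adj p.1 p.2} = ∑ x ∈ s, G.degreeIn s x := by
  simp only [degreeIn, card_filter, sum_product]

lemma sum_degreeIn_add_two_mul_le {s t : Finset V} (h : Disjoint s t) :
    ∑ x ∈ s, G.degreeIn s x + 2 * ∑ x ∈ t, G.degreeIn s x ≤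
      ∑ x ∈ s ∪ t, G.degreeIn (s ∪ t) x := by
  simp only [degreeIn_union G h, sum_union h, sum_add_distrib, G.sum_degreeIn_comm s t]
  omega

lemma sum_sum_neighborFinset [Fintype V] (s : Finset V) (f : V → ℕ) :
    ∑ v ∈ s, ∑ x ∈ G.neighborFinset v, f x = ∑ x, G.degreeIn s x * f x := by
  simp only [neighborFinset_eq_filter, sum_filter, degreeIn, card_filter, sum_mul, ite_mul,
    one_mul, zero_mul]
  rw [sum_comm]
  exact sum_congr rfl fun x _ => sum_congr rfl fun y _ => by rw [G.adj_comm]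

lemma degreeIn_graphSq_le [Fintype V] (s : Finset V) (v : V) :
    (graphSq G).degreeIn s v ≤
      ∑ x ∈ G.neighborFinset v, (G.degreeIn (s.erase v) x + if x ∈ s then 1 else 0) := by
  calc (graphSq G).degreeIn s v
      ≤ #((G.neighborFinset v).biUnion fun x => {u ∈ s.erase v | G.Adj x u} ∪ s ∩ {x}) := by
        refine card_le_card fun u hu => ?_
        obtain ⟨hus, hvu, hadj | ⟨x, hvx, hxu⟩⟩ := mem_filter.1 hu
        · exact mem_biUnion.2 ⟨u, (mem_neighborFinset ..).2 hadj,
            mem_union_right _ (mem_inter.2 ⟨hus, mem_singleton_self u⟩)⟩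
        · exact mem_biUnion.2 ⟨x, (mem_neighborFinset ..).2 hvx,
            mem_union_left _ (mem_filter.2 ⟨mem_erase.2 ⟨hvu.symm, hus⟩, hxu⟩)⟩
    _ ≤ ∑ x ∈ G.neighborFinset v, #({u ∈ s.erase v | G.Adj x u} ∪ s ∩ {x}) :=
        card_biUnion_le
    _ ≤ _ := by
        refine sum_le_sum fun x _ => (card_union_le _ _).trans ?_
        split_ifs with hx <;> simp [degreeIn, hx]

end SimpleGraph

namespace IsDPCover

variable {V : Type u} {G : SimpleGraph V} {L : V → Finset ℕ} {H : SimpleGraph (V × ℕ)}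

lemma card_blocked_le (hH : IsDPCover G L H) (f : V → ℕ) {s : Finset V} {v : V} (hv : v ∉ s) :
    #{c ∈ L v | ∃ u ∈ s, H.Adj (v, c) (u, f u)} ≤ G.degreeIn s v := by
  calc #{c ∈ L v | ∃ u ∈ s, H.Adj (v, c) (u, f u)}
      ≤ #({u ∈ s | G.Adj v u}.biUnion fun u => {c ∈ L v | H.Adj (v, c) (u, f u)}) := by
        refine card_le_card fun c hc => ?_
        obtain ⟨hcL, u, hu, hadj⟩ := mem_filter.1 hc
        have hGvu := (hH.2.1 v u c (f u) hadj).2.2.resolve_left fun h => hv (h ▸ hu)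
        exact mem_biUnion.2 ⟨u, mem_filter.2 ⟨hu, hGvu⟩, mem_filter.2 ⟨hcL, hadj⟩⟩
    _ ≤ #{u ∈ s | G.Adj v u} * 1 := by
        refine card_biUnion_le_card_mul _ _ _ fun u hu => card_le_one.2 fun c hc c' hc' => ?_
        have huv : u ≠ v := fun h => hv (h ▸ (mem_filter.1 hu).1)
        exact hH.2.2 u v huv (f u) c c' (mem_filter.1 hc).2.symm (mem_filter.1 hc').2.symm
    _ = G.degreeIn s v := mul_one _

lemma exists_free_color (hH : IsDPCover G L H) {k : ℕ} {v : V} (hL : k + 1 ≤ #(L v))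
    (f : V → ℕ) {s : Finset V} (hv : v ∉ s) (hdeg : G.degreeIn s v ≤ k) :
    ∃ c ∈ L v, ∀ u ∈ s, ¬ H.Adj (v, c) (u, f u) := by
  have : ¬ L v ⊆ {c ∈ L v | ∃ u ∈ s, H.Adj (v, c) (u, f u)} := fun hsub =>
    absurd ((card_le_card hsub).trans ((hH.card_blocked_le f hv).trans hdeg)) (by omega)
  obtain ⟨c, hc, hfree⟩ := not_subset.1 this
  exact ⟨c, hc, fun u hu hadj => hfree (mem_filter.2 ⟨hc, u, hu, hadj⟩)⟩

end IsDPCover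

theorem dpColorable_of_degenerate {V : Type u} [Fintype V] {G : SimpleGraph V} {k : ℕ}
    (hdeg : ∀ s : Finset V, s.Nonempty → ∃ v ∈ s, G.degreeIn s v ≤ k) :
    DPColorable G (k + 1) := by
  intro L H hH hL
  suffices ∀ s : Finset V, ∃ f : V → ℕ, (∀ v, f v ∈ L v) ∧
      ∀ u ∈ s, ∀ w ∈ s, u ≠ w → ¬ H.Adj (u, f u) (w, f w) by
    obtain ⟨f, hfL, hf⟩ := this univ
    exact ⟨f, hfL, fun u w => hf u (mem_univ u) w (mem_univ w)⟩
  intro s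
  induction s using Finset.strongInduction with
  | H s ih =>
    rcases s.eq_empty_or_nonempty with rfl | hs
    · have hne v : (L v).Nonempty := card_pos.1 (by have := hL v; omega)
      exact ⟨fun v => (hne v).choose, fun v => (hne v).choose_spec, by simp⟩
    obtain ⟨v, hv, hvk⟩ := hdeg s hs
    obtain ⟨f, hfL, hf⟩ := ih (s.erase v) (erase_ssubset hv)
    obtain ⟨c, hcL, hc⟩ := hH.exists_free_color (hL v) f (notMem_erase v s)
      ((G.degreeIn_mono (erase_subset v s) v).trans hvk)
    refine ⟨Function.update f v c, fun w => ?_, fun u hu w hw huw => ?_⟩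
    · rcases eq_or_ne w v with rfl | hw
      · simpa using hcL
      · simpa [hw] using hfL w
    rcases eq_or_ne u v with rfl | hu'
    · simpa [huw.symm] using hc w (mem_erase.2 ⟨huw.symm, hw⟩)
    rcases eq_or_ne w v with rfl | hw'
    · simpa [hu'] using fun h => hc u (mem_erase.2 ⟨hu', hu⟩) h.symm
    simpa [hu', hw'] using hf u (mem_erase.2 ⟨hu', hu⟩) w (mem_erase.2 ⟨hw', hw⟩) huw

lemma MadLT.sum_degreeIn_lt {V : Type u} [Fintype V] {G : SimpleGraph V} {q : ℚ}
    (h : MadLT G q) {s : Finset V} (hs : s.Nonempty) :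
    (∑ x ∈ s, G.degreeIn s x : ℚ) < q * #s := by
  have := h s hs
  rwa [G.card_adj_pairs_eq_sum_degreeIn, Nat.cast_sum] at this

namespace SimpleGraph

variable {V : Type u} (G : SimpleGraph V)

/-- What `x` hands to each of its neighbours in `s`, measured so that an edge end inside `T` is
worth 8 and a vertex of `T` costs 18. A vertex of `s` hands 8, plus 2 when it has three neighbours
in `s` (spreading its surplus `3 · 8 - 18`). An outside vertex with `d ≥ 2` neighbours in `s` lies
in `T`, and `d · charge = 16 d - 18` is what its `2 d` edge ends towards `s` are worth, less its
own cost. -/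
noncomputable def charge (s : Finset V) (x : V) : ℕ :=
  if x ∈ s then (if G.degreeIn s x = 3 then 10 else 8)
  else if G.degreeIn s x = 3 then 10 else if G.degreeIn s x = 2 then 7 else 0

variable {G} [Fintype V]

lemma le_sum_charge (hsub : ∀ v, G.degree v ≤ 3) {s : Finset V} {v : V} (hv : v ∈ s)
    (h5 : 5 ≤ (graphSq G).degreeIn s v) :
    18 + (if G.degreeIn s v = 3 then 6 else 0) ≤ ∑ x ∈ G.neighborFinset v, G.charge s x := by
  have hreach : ∀ x ∈ G.neighborFinset v,
      G.degreeIn (s.erase v) x + (if x ∈ s then 1 else 0) ≤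
        3 * (if x ∈ s ∧ G.degreeIn s x = 3 then 1 else 0) +
        2 * (if x ∈ s ∧ G.degreeIn s x ≠ 3 then 1 else 0) +
        2 * (if x ∉ s ∧ G.degreeIn s x = 3 then 1 else 0) +
        (if x ∉ s ∧ G.degreeIn s x = 2 then 1 else 0) := by
    intro x hx
    have h1 := G.degreeIn_erase_add_one hv ((mem_neighborFinset ..).1 hx).symm
    have h2 := (G.degreeIn_le_degree s x).trans (hsub x)
    by_cases hxs : x ∈ s <;> simp [hxs] <;> split_ifs <;> omega
  have hcharge : ∀ x ∈ G.neighborFinset v, G.charge s x =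
      10 * (if x ∈ s ∧ G.degreeIn s x = 3 then 1 else 0) +
        8 * (if x ∈ s ∧ G.degreeIn s x ≠ 3 then 1 else 0) +
        10 * (if x ∉ s ∧ G.degreeIn s x = 3 then 1 else 0) +
        7 * (if x ∉ s ∧ G.degreeIn s x = 2 then 1 else 0) := by
    intro x _
    by_cases hxs : x ∈ s <;> simp [charge, hxs] <;> split_ifs <;> omega
  have hsq := (h5.trans (G.degreeIn_graphSq_le s v)).trans (sum_le_sum hreach)
  rw [sum_congr rfl hcharge]
  simp only [sum_add_distrib, ← mul_sum, sum_boole, Nat.cast_id] at hsq ⊢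
  have hdv : G.degreeIn s v = #{x ∈ G.neighborFinset v | x ∈ s ∧ G.degreeIn s x = 3} +
      #{x ∈ G.neighborFinset v | x ∈ s ∧ G.degreeIn s x ≠ 3} := by
    rw [← filter_filter, ← filter_filter, card_filter_add_card_filter_not]
    simp only [degreeIn, neighborFinset_eq_filter, filter_filter]
    congr 1; ext x; simp [and_comm]
  have hdv3 := (G.degreeIn_le_degree s v).trans (hsub v)
  -- Three neighbours in `s` pay `24` on their own; with fewer, `hsq` forces enough charge.
  split_ifs <;> omega

lemma degreeIn_mul_charge_of_mem (hsub : ∀ v, G.degree v ≤ 3) {s : Finset V} {x : V}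
    (hx : x ∈ s) :
    G.degreeIn s x * G.charge s x =
      8 * G.degreeIn s x + if G.degreeIn s x = 3 then 6 else 0 := by
  have := (G.degreeIn_le_degree s x).trans (hsub x)
  simp only [charge, hx, if_true]
  split_ifs <;> omega

lemma degreeIn_mul_charge_of_notMem (hsub : ∀ v, G.degree v ≤ 3) {s : Finset V} {x : V}
    (hx : x ∉ s) :
    G.degreeIn s x * G.charge s x + (if 2 ≤ G.degreeIn s x then 18 else 0) =
      if 2 ≤ G.degreeIn s x then 16 * G.degreeIn s x else 0 := by
  have := (G.degreeIn_le_degree s x).trans (hsub x)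
  simp only [charge, hx, if_false]
  split_ifs <;> omega

lemma card_le_of_forall_five_le_degreeIn_graphSq (hsub : ∀ v, G.degree v ≤ 3) {s : Finset V}
    (h : ∀ v ∈ s, 5 ≤ (graphSq G).degreeIn s v) :
    18 * (#s + #{x ∈ sᶜ | 2 ≤ G.degreeIn s x}) ≤
      8 * (∑ x ∈ s, G.degreeIn s x + 2 * ∑ x ∈ sᶜ with 2 ≤ G.degreeIn s x, G.degreeIn s x) := by
  have hdischarge : ∑ v ∈ s, (18 + if G.degreeIn s v = 3 then 6 else 0) ≤
      ∑ x, G.degreeIn s x * G.charge s x :=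
    (sum_le_sum fun v hv => le_sum_charge hsub hv (h v hv)).trans_eq
      (G.sum_sum_neighborFinset s _)
  have hinside : ∑ x ∈ s, G.degreeIn s x * G.charge s x =
      ∑ x ∈ s, (8 * G.degreeIn s x + if G.degreeIn s x = 3 then 6 else 0) :=
    sum_congr rfl fun x hx => degreeIn_mul_charge_of_mem hsub hx
  have houtside : ∑ x ∈ sᶜ, G.degreeIn s x * G.charge s x +
      18 * #{x ∈ sᶜ | 2 ≤ G.degreeIn s x} =
        16 * ∑ x ∈ sᶜ with 2 ≤ G.degreeIn s x, G.degreeIn s x := by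
    rw [card_filter, sum_filter, mul_sum, mul_sum, ← sum_add_distrib]
    refine sum_congr rfl fun x hx => ?_
    have := degreeIn_mul_charge_of_notMem hsub (mem_compl.1 hx)
    split_ifs at this ⊢ <;> omega
  rw [← sum_add_sum_compl s, hinside] at hdischarge
  simp only [sum_add_distrib, sum_const, smul_eq_mul, ← mul_sum] at hdischarge
  omega

theorem exists_degreeIn_graphSq_le_four (hsub : ∀ v, G.degree v ≤ 3) (hmad : MadLT G (9 / 4))
    {s : Finset V} (hs : s.Nonempty) : ∃ v ∈ s, (graphSq G).degreeIn s v ≤ 4 := by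
  by_contra! h
  set W := {x ∈ sᶜ | 2 ≤ G.degreeIn s x}
  have hsW : Disjoint s W :=
    Finset.disjoint_left.2 fun x hx hxW => mem_compl.1 (mem_filter.1 hxW).1 hx
  have hcount := card_le_of_forall_five_le_degreeIn_graphSq hsub h
  have hedges := G.sum_degreeIn_add_two_mul_le hsW
  have hlt := hmad.sum_degreeIn_lt (hs.mono (subset_union_left (s₂ := W)))
  rw [card_union_of_disjoint hsW] at hlt
  have : (18 * (#s + #W) : ℚ) ≤ 8 * ∑ x ∈ s ∪ W, G.degreeIn (s ∪ W) x := by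
    exact_mod_cast hcount.trans (Nat.mul_le_mul_left 8 hedges)
  push_cast at this hlt
  linarith

end SimpleGraph

/-- Theorem 1: every subcubic graph with `mad(G) < 9/4` has a
DP-5-colorable square. -/
theorem sq_dp5_of_mad_lt {V : Type u} [Fintype V] (G : SimpleGraph V)
    (hsub : ∀ v, G.degree v ≤ 3) (hmad : MadLT G (9 / 4)) :
    DPColorable (graphSq G) 5 :=
  dpColorable_of_degenerate fun _ hs => SimpleGraph.exists_degreeIn_graphSq_le_four hsub hmad hs
end

section
/- Every subcubic graph G with mad(G) < 12/5 has a square G² that is DP-6-colorable. -/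
open scoped Classical

universe u v

/-!
A minimal counterexample `G` contains neither a vertex of degree 1 nor an edge joining two
vertices of degree 2: in either case delete the edges at one vertex, colour the square of the
smaller graph, and greedily recolour the one or two vertices whose neighbourhoods in `G²`
changed; each of them has at most 5 neighbours in `G²`.
Without these configurations every non-isolated vertex has degree 2 or 3 and no two vertices
of degree 2 are adjacent, so the charge `5 - 6 / deg x - 6 / deg y` of every ordered edge
`(x, y)` is nonnegative; these charges sum to `5 · 2|E| - 12 n` over the `n` non-isolated
vertices, contradicting `mad(G) < 12/5`.
-/

open Finset SimpleGraph

variable {V : Type*}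

def restrictCover (H : SimpleGraph (V × ℕ)) (K : SimpleGraph V) : SimpleGraph (V × ℕ) where
  Adj p q := H.Adj p q ∧ (p.1 = q.1 ∨ K.Adj p.1 q.1)
  symm := ⟨fun _ _ ⟨h, hK⟩ => ⟨h.symm, hK.imp Eq.symm fun h => h.symm⟩⟩
  loopless := ⟨fun p h => H.loopless.irrefl p h.1⟩

namespace IsDPCover

variable {K : SimpleGraph V} {L : V → Finset ℕ} {H : SimpleGraph (V × ℕ)}

theorem restrict (hH : IsDPCover K L H) (K' : SimpleGraph V) :
    IsDPCover K' L (restrictCover H K') := by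
  obtain ⟨hfib, hcross, hmatch⟩ := hH
  refine ⟨fun v c hc c' hc' hne => ⟨hfib v c hc c' hc' hne, Or.inl rfl⟩,
    fun u v c c' h => ⟨(hcross u v c c' h.1).1, (hcross u v c c' h.1).2.1, h.2⟩,
    fun u v huv c c₁ c₂ h₁ h₂ => hmatch u v huv c c₁ c₂ h₁.1 h₂.1⟩

theorem adj_of_adj (hH : IsDPCover K L H) {x y : V} {c c' : ℕ} (h : H.Adj (x, c) (y, c'))
    (hxy : x ≠ y) : K.Adj x y :=
  ((hH.2.1 x y c c' h).2.2).resolve_left hxy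

/-- Each already coloured vertex `y` forbids at most one colour at `v`, since cross edges
form matchings. -/
theorem exists_color_avoiding (hH : IsDPCover K L H) {v : V} {B : Finset V} (hvB : v ∉ B)
    (hB : B.card < (L v).card) (g : V → ℕ) :
    ∃ c ∈ L v, ∀ y ∈ B, ¬ H.Adj (v, c) (y, g y) := by
  let forbidden := B.biUnion fun y => (L v).filter fun c => H.Adj (v, c) (y, g y)
  have hforbidden : forbidden.card < (L v).card := by
    refine lt_of_le_of_lt ?_ (by simpa using hB)
    refine (card_biUnion_le_card_mul _ _ 1 fun y hy => card_le_one.mpr ?_).trans_eq (mul_one _)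
    intro c₁ h₁ c₂ h₂
    exact hH.2.2 y v (ne_of_mem_of_not_mem hy hvB) (g y) c₁ c₂ (mem_filter.mp h₁).2.symm
      (mem_filter.mp h₂).2.symm
  obtain ⟨c, hc, hcf⟩ := exists_mem_notMem_of_card_lt_card hforbidden
  exact ⟨c, hc, fun y hy hadj =>
    hcf (mem_biUnion.mpr ⟨y, hy, mem_filter.mpr ⟨hc, hadj⟩⟩)⟩

end IsDPCover

namespace DPColorable

theorem bot {k : ℕ} (hk : k ≠ 0) : DPColorable (⊥ : SimpleGraph V) k := by
  intro L H hH hL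
  have hne (v : V) : (L v).Nonempty := card_pos.mp (by have := hL v; omega)
  choose f hf using hne
  exact ⟨f, hf, fun u v huv hadj => hH.adj_of_adj hadj huv⟩

theorem of_adj_imp_of_degree_lt {K K' : SimpleGraph V} {k : ℕ} {v : V}
    [Fintype (K.neighborSet v)] (hK' : DPColorable K' k)
    (hKK' : ∀ x y, x ≠ v → y ≠ v → K.Adj x y → K'.Adj x y) (hv : K.degree v < k) :
    DPColorable K k := by
  intro L H hH hL
  obtain ⟨f, hfL, hf⟩ := hK' L (restrictCover H K') (hH.restrict K') hL
  obtain ⟨c, hcL, hc⟩ := hH.exists_color_avoiding (K.notMem_neighborFinset_self v)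
    (hv.trans_le (hL v)) f
  have hfree (y : V) (hyv : y ≠ v) : ¬ H.Adj (v, c) (y, f y) := fun hadj =>
    hc y ((K.mem_neighborFinset v y).mpr (hH.adj_of_adj hadj hyv.symm)) hadj
  refine ⟨Function.update f v c, fun x => ?_, fun x y hxy hadj => ?_⟩
  · rcases eq_or_ne x v with rfl | hx
    · simpa using hcL
    · simpa [hx] using hfL x
  rcases eq_or_ne x v with rfl | hxv
  · simp only [Function.update_self, Function.update_of_ne hxy.symm] at hadj
    exact hfree y hxy.symm hadj
  rcases eq_or_ne y v with rfl | hyv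
  · simp only [Function.update_self, Function.update_of_ne hxy] at hadj
    exact hfree x hxy hadj.symm
  simp only [Function.update_of_ne hxv, Function.update_of_ne hyv] at hadj
  exact hf x y hxy ⟨hadj, Or.inr (hKK' x y hxv hyv (hH.adj_of_adj hadj hxy))⟩

end DPColorable

section Square

variable {G : SimpleGraph V}

theorem graphSq_bot : graphSq (⊥ : SimpleGraph V) = ⊥ := by
  ext x y
  simp [graphSq]

theorem graphSq_deleteIncidenceSet_adj {v x y : V} (h : (graphSq G).Adj x y) (hx : x ≠ v)
    (hy : y ≠ v) (hxy : ¬ (G.Adj v x ∧ G.Adj v y)) :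
    (graphSq (G.deleteIncidenceSet v)).Adj x y := by
  obtain ⟨hne, hxy' | ⟨z, hxz, hzy⟩⟩ := h
  · exact ⟨hne, Or.inl (G.deleteIncidenceSet_adj.mpr ⟨hxy', hx, hy⟩)⟩
  · rcases eq_or_ne z v with rfl | hz
    · exact absurd ⟨hxz.symm, hzy⟩ hxy
    · exact ⟨hne, Or.inr ⟨z, G.deleteIncidenceSet_adj.mpr ⟨hxz, hx, hz⟩,
        G.deleteIncidenceSet_adj.mpr ⟨hzy, hz, hy⟩⟩⟩

variable [Fintype V]

/-- Each neighbour `z` of `v` contributes itself and its other `deg z - 1` neighbours. -/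
theorem degree_graphSq_le (v : V) :
    (graphSq G).degree v ≤ ∑ z ∈ G.neighborFinset v, G.degree z := by
  have hsub : (graphSq G).neighborFinset v ⊆
      (G.neighborFinset v).biUnion fun z => insert z ((G.neighborFinset z).erase v) := by
    intro y hy
    obtain ⟨hvy, hadj | ⟨z, hvz, hzy⟩⟩ := ((graphSq G).mem_neighborFinset v y).mp hy
    · exact mem_biUnion.mpr ⟨y, (G.mem_neighborFinset v y).mpr hadj, mem_insert_self _ _⟩
    · exact mem_biUnion.mpr ⟨z, (G.mem_neighborFinset v z).mpr hvz,
        mem_insert_of_mem (mem_erase.mpr ⟨hvy.symm, (G.mem_neighborFinset z y).mpr hzy⟩)⟩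
  rw [← card_neighborFinset_eq_degree]
  refine (card_le_card hsub).trans (card_biUnion_le.trans (sum_le_sum fun z hz => ?_))
  have hvz : v ∈ G.neighborFinset z := (G.mem_neighborFinset z v).mpr
    ((G.mem_neighborFinset v z).mp hz).symm
  have hdeg := card_erase_add_one hvz
  rw [card_neighborFinset_eq_degree] at hdeg
  exact (card_insert_le _ _).trans hdeg.le

theorem degree_graphSq_le_of_adj {Δ : ℕ} (hΔ : ∀ x, G.degree x ≤ Δ) {u v : V}
    (huv : G.Adj v u) : (graphSq G).degree v ≤ G.degree u + (G.degree v - 1) * Δ := by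
  have hu : u ∈ G.neighborFinset v := (G.mem_neighborFinset v u).mpr huv
  calc (graphSq G).degree v ≤ ∑ z ∈ G.neighborFinset v, G.degree z := degree_graphSq_le v
    _ = G.degree u + ∑ z ∈ (G.neighborFinset v).erase u, G.degree z :=
      (add_sum_erase _ _ hu).symm
    _ ≤ G.degree u + (G.degree v - 1) * Δ := by
      gcongr
      refine (sum_le_card_nsmul _ _ _ fun z _ => hΔ z).trans_eq ?_
      rw [card_erase_of_mem hu, card_neighborFinset_eq_degree, smul_eq_mul]

end Square

section Discharging

variable {G : SimpleGraph V}

theorem sum_filter_adj_snd_eq_fst {M : Type*} [AddCommMonoid M] (s : Finset V) (g : V → M) :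
    ∑ p ∈ (s ×ˢ s).filter (fun p => G.Adj p.1 p.2), g p.2 =
      ∑ p ∈ (s ×ˢ s).filter (fun p => G.Adj p.1 p.2), g p.1 :=
  sum_nbij' Prod.swap Prod.swap (by simp [G.adj_comm, and_comm]) (by simp [G.adj_comm, and_comm])
    (by simp) (by simp) (by simp)

variable [Fintype V]

theorem MadLT.mono {G' : SimpleGraph V} {q : ℚ} (hG : MadLT G q) (h : G' ≤ G) : MadLT G' q :=
  fun s hs => lt_of_le_of_lt (by exact_mod_cast card_le_card (monotone_filter_right _
    fun _ _ hp => h hp)) (hG s hs)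

theorem sum_filter_adj_fst {R : Type*} [NonAssocSemiring R] {s : Finset V}
    (hs : ∀ x ∈ s, ∀ y, G.Adj x y → y ∈ s) (g : V → R) :
    ∑ p ∈ (s ×ˢ s).filter (fun p => G.Adj p.1 p.2), g p.1 =
      ∑ x ∈ s, (G.degree x : R) * g x := by
  rw [sum_filter, sum_product]
  refine sum_congr rfl fun x hx => ?_
  rw [← sum_filter]
  dsimp only
  rw [sum_const, nsmul_eq_mul, ← card_neighborFinset_eq_degree]
  congr 3
  ext y
  simp only [mem_filter, mem_neighborFinset, and_iff_right_iff_imp]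
  exact hs x hx y

theorem exists_degree_eq_one_or_adj_degree_eq_two (hsub : ∀ v, G.degree v ≤ 3)
    (hmad : MadLT G (12 / 5)) (hG : G ≠ ⊥) :
    (∃ v, G.degree v = 1) ∨ ∃ u v, G.Adj u v ∧ G.degree u = 2 ∧ G.degree v = 2 := by
  by_contra! h
  obtain ⟨h1, h2⟩ := h
  have hdeg {x y : V} (hxy : G.Adj x y) : G.degree x = 2 ∨ G.degree x = 3 := by
    have := (G.degree_pos_iff_exists_adj x).mpr ⟨y, hxy⟩
    have := h1 x
    have := hsub x
    omega
  set s := univ.filter fun x => 0 < G.degree x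
  have hmem {x y : V} (hxy : G.Adj x y) : x ∈ s :=
    mem_filter.mpr ⟨mem_univ x, (G.degree_pos_iff_exists_adj x).mpr ⟨y, hxy⟩⟩
  obtain ⟨a, b, hab⟩ := ne_bot_iff_exists_adj.mp hG
  have hcharge : ∀ p ∈ (s ×ˢ s).filter fun p => G.Adj p.1 p.2,
      (0 : ℚ) ≤ 5 - 6 / G.degree p.1 - 6 / G.degree p.2 := by
    intro p hp
    obtain ⟨-, hp⟩ := mem_filter.mp hp
    rcases hdeg hp with h | h <;> rcases hdeg hp.symm with h' | h'
    · exact absurd h' (h2 _ _ hp h)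
    all_goals norm_num [h, h']
  have hsix : ∑ x ∈ s, (G.degree x : ℚ) * (6 / G.degree x) = 6 * s.card := by
    rw [sum_congr rfl fun x hx => mul_div_cancel₀ (6 : ℚ) (by simp_all [s]; omega), sum_const,
      nsmul_eq_mul, mul_comm]
  have htotal : ∑ p ∈ (s ×ˢ s).filter (fun p => G.Adj p.1 p.2),
      (5 - 6 / (G.degree p.1 : ℚ) - 6 / G.degree p.2) =
      5 * ((s ×ˢ s).filter fun p => G.Adj p.1 p.2).card - 12 * s.card := by
    rw [sum_sub_distrib, sum_sub_distrib, sum_const, nsmul_eq_mul,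
      sum_filter_adj_snd_eq_fst s fun x => 6 / (G.degree x : ℚ),
      sum_filter_adj_fst (fun x _ y hxy => hmem hxy.symm) fun x => 6 / (G.degree x : ℚ), hsix]
    ring
  linarith [sum_nonneg hcharge, hmad s ⟨a, hmem hab⟩]

end Discharging

theorem SimpleGraph.deleteIncidenceSet_lt {G : SimpleGraph V} {v w : V} (hvw : G.Adj v w) :
    G.deleteIncidenceSet v < G :=
  lt_of_le_not_ge (G.deleteIncidenceSet_le v) fun h =>
    (deleteIncidenceSet_adj.mp (h hvw)).2.1 rfl

section Reductions

variable [Fintype V] {G : SimpleGraph V} {k Δ : ℕ}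

theorem dpColorable_graphSq_of_degree_eq_one (hΔ : ∀ x, G.degree x ≤ Δ) (hk : Δ < k) {v : V}
    (hv : G.degree v = 1) (h : DPColorable (graphSq (G.deleteIncidenceSet v)) k) :
    DPColorable (graphSq G) k := by
  obtain ⟨u, hvu⟩ := (G.degree_pos_iff_exists_adj v).mp (by omega)
  refine h.of_adj_imp_of_degree_lt (fun x y hx hy hxy =>
    graphSq_deleteIncidenceSet_adj hxy hx hy fun ⟨hvx, hvy⟩ => ?_) ?_
  · have := one_lt_card.mpr ⟨x, (G.mem_neighborFinset v x).mpr hvx,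
      y, (G.mem_neighborFinset v y).mpr hvy, hxy.1⟩
    rw [card_neighborFinset_eq_degree] at this
    omega
  · have := degree_graphSq_le_of_adj hΔ hvu
    have := hΔ u
    rw [hv] at *
    omega

theorem dpColorable_graphSq_of_adj_degree_eq_two (hΔ : ∀ x, G.degree x ≤ Δ) (hk : Δ + 2 < k)
    {u v : V} (huv : G.Adj u v) (hu : G.degree u = 2) (hv : G.degree v = 2)
    (h : DPColorable (graphSq (G.deleteIncidenceSet v)) k) : DPColorable (graphSq G) k := by
  have hdeg {x y : V} (hxy : G.Adj x y) (hx : G.degree x = 2) (hy : G.degree y = 2) :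
      (graphSq G).degree x < k := by
    have := degree_graphSq_le_of_adj hΔ hxy
    rw [hx, hy] at this
    omega
  have hdel : DPColorable ((graphSq G).deleteIncidenceSet v) k := by
    refine h.of_adj_imp_of_degree_lt (v := u) (fun x y hxu hyu hxy => ?_)
      ((degree_le_of_le ((graphSq G).deleteIncidenceSet_le v)).trans_lt (hdeg huv hu hv))
    obtain ⟨hxy, hxv, hyv⟩ := deleteIncidenceSet_adj.mp hxy
    refine graphSq_deleteIncidenceSet_adj hxy hxv hyv fun ⟨hvx, hvy⟩ => ?_
    have := two_lt_card.mpr ⟨u, (G.mem_neighborFinset v u).mpr huv.symm,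
      x, (G.mem_neighborFinset v x).mpr hvx, y, (G.mem_neighborFinset v y).mpr hvy,
      Ne.symm hxu, Ne.symm hyu, hxy.1⟩
    rw [card_neighborFinset_eq_degree] at this
    omega
  exact hdel.of_adj_imp_of_degree_lt (v := v)
    (fun x y hx hy hxy => deleteIncidenceSet_adj.mpr ⟨hxy, hx, hy⟩) (hdeg huv.symm hv hu)

end Reductions

/-- Theorem 2: every subcubic graph with `mad(G) < 12/5` has a
DP-6-colorable square. -/
theorem sq_dp6_of_mad_lt {V : Type u} [Fintype V] (G : SimpleGraph V)
    (hsub : ∀ v, G.degree v ≤ 3) (hmad : MadLT G (12 / 5)) :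
    DPColorable (graphSq G) 6 := by
  induction G using WellFoundedLT.induction with
  | ind G ih =>
    rcases eq_or_ne G ⊥ with rfl | hG
    · rw [graphSq_bot]
      exact DPColorable.bot (by norm_num)
    have hsmaller {v w : V} (hvw : G.Adj v w) :
        DPColorable (graphSq (G.deleteIncidenceSet v)) 6 :=
      -- `convert` matches the classical `Fintype` instance on the neighbour sets of the
      -- smaller graph with the one derived from `G`.
      ih _ (deleteIncidenceSet_lt hvw)
        (fun x => by convert Nat.le_trans (degree_le_of_le (G.deleteIncidenceSet_le v)) (hsub x))
        (hmad.mono (G.deleteIncidenceSet_le v))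
    rcases exists_degree_eq_one_or_adj_degree_eq_two hsub hmad hG with
      ⟨v, hv⟩ | ⟨u, v, huv, hu, hv⟩
    · obtain ⟨w, hvw⟩ := (G.degree_pos_iff_exists_adj v).mp (by omega)
      exact dpColorable_graphSq_of_degree_eq_one hsub (by norm_num) hv (hsmaller hvw)
    · exact dpColorable_graphSq_of_adj_degree_eq_two hsub (by norm_num) huv hu hv
        (hsmaller huv.symm)
end
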